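/- arXiv:1208.0120 — 5 statements merged into one kernel-verified Lean document; each statement's English description precedes it below -/
import Mathlib

section
/- Let A and M be C*-algebras with M unital, let ρ : A → M be a *-homomorphism, let a ∈ A, and let v ∈ M be an isometry (v*v = 1). Then ‖vρ(a) − av‖² ≤ ‖ρ(a)‖·‖ρ(a) − v*av‖ + ‖ρ(a*) − v*a*v‖·‖ρ(a)‖ + ‖v*(a*a)v − ρ(a*a)‖. -/
/-!
Put `x = v b - c v`. Using `v⋆ v = 1`, `x⋆ x` splits as
`b⋆ (b - v⋆ c v) + (b⋆ - v⋆ c⋆ v) b + (v⋆ c⋆ c v - b⋆ b)`, and the C⋆-identity `‖x‖² = ‖x⋆ x‖`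
turns this into the estimate. Take `b = ρ a`, `c = a`; multiplicativity of `ρ` gives
`b⋆ b = ρ (a⋆ a)`.
-/

section Isometry

variable {E : Type*}

theorem star_mul_self_mul_sub_mul_eq [Ring E] [StarRing E] {v : E} (hv : star v * v = 1)
    (b c : E) :
    star (v * b - c * v) * (v * b - c * v) =
      star b * (b - star v * c * v) + (star b - star v * star c * v) * b
        + (star v * (star c * c) * v - star b * b) := by
  have hb : star b * star v * (v * b) = star b * b := by
    rw [mul_assoc, ← mul_assoc (star v), hv, one_mul]
  simp only [star_sub, star_mul, sub_mul, mul_sub, hb]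
  noncomm_ring

theorem sq_norm_mul_sub_mul_le [NormedRing E] [StarRing E] [CStarRing E] {v : E}
    (hv : star v * v = 1) (b c : E) :
    ‖v * b - c * v‖ ^ 2 ≤
      ‖b‖ * ‖b - star v * c * v‖ + ‖star b - star v * star c * v‖ * ‖b‖
        + ‖star v * (star c * c) * v - star b * b‖ := by
  rw [sq, ← CStarRing.norm_star_mul_self, star_mul_self_mul_sub_mul_eq hv]
  calc _ ≤ ‖star b * (b - star v * c * v)‖ + ‖(star b - star v * star c * v) * b‖
          + ‖star v * (star c * c) * v - star b * b‖ := norm_add₃_le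
    _ ≤ _ := by
      gcongr
      · exact (norm_mul_le _ _).trans_eq (by rw [norm_star])
      · exact norm_mul_le _ _

end Isometry

theorem stmt1_general {M : Type*} [CStarAlgebra M]
    (A : NonUnitalStarSubalgebra ℂ M)
    (ρ : A →⋆ₙₐ[ℂ] M) (a : A) (v : M) (hv : star v * v = 1) :
    ‖v * ρ a - (a : M) * v‖ ^ 2 ≤
      ‖ρ a‖ * ‖ρ a - star v * (a : M) * v‖
        + ‖ρ (star a) - star v * star (a : M) * v‖ * ‖ρ a‖
        + ‖star v * (star (a : M) * (a : M)) * v - ρ (star a * a)‖ := by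
  rw [map_mul, map_star]
  exact sq_norm_mul_sub_mul_le hv (ρ a) a

/-- Let `M` be a unital C*-algebra, `A` a C*-subalgebra of `M`,
`ρ : A → M` a *-homomorphism, `a ∈ A`, and `v ∈ M` an isometry (`v* v = 1`). Then
`‖vρ(a) − av‖² ≤ ‖ρ(a)‖·‖ρ(a) − v*av‖ + ‖ρ(a*) − v*a*v‖·‖ρ(a)‖ + ‖v*(a*a)v − ρ(a*a)‖`. -/
theorem stmt1 {M : Type*} [CStarAlgebra M]
    (A : NonUnitalStarSubalgebra ℂ M) (hA : IsClosed (A : Set M))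
    (ρ : A →⋆ₙₐ[ℂ] M) (a : A) (v : M) (hv : star v * v = 1) :
    ‖v * ρ a - (a : M) * v‖ ^ 2 ≤
      ‖ρ a‖ * ‖ρ a - star v * (a : M) * v‖
        + ‖ρ (star a) - star v * star (a : M) * v‖ * ‖ρ a‖
        + ‖star v * (star (a : M) * (a : M)) * v - ρ (star a * a)‖ :=
  stmt1_general A ρ a v hv
end

section
/- Let M be a unital C*-algebra and let q, v, T ∈ M satisfy: q = q* and q² = q; v*v = 1; T*T = 1 − q; T T* = 1; and T q = 0. Then the element w := (1 − v v* + v T* v*) T + v q is a unitary of M, i.e., w*w = w w* = 1. -/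
/-!
Put `u := 1 - v v* + v T* v*`. Because `v` is an isometry, `u* u = 1 - v (1 - T T*) v* = 1`,
`u u* = 1 - v (1 - T* T) v* = 1 - v q v*` and `u* v = v T`. Then `w = u T + v q`, all cross terms
vanish because `T q = 0`, and `w* w = T* T + q = 1`, `w w* = u u* + v q v* = 1`.
-/

section StarRing

variable {R : Type*} [Ring R] [StarRing R] {v : R}

theorem star_one_sub_add_conj (v a : R) :
    star (1 - v * star v + v * a * star v) = 1 - v * star v + v * star a * star v := by
  simp only [star_add, star_sub, star_mul, star_one, star_star, mul_assoc]

theorem star_mul_self_one_sub_add_conj (hv : star v * v = 1) (a : R) :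
    star (1 - v * star v + v * a * star v) * (1 - v * star v + v * a * star v) =
      1 - v * (1 - star a * a) * star v := by
  have hv' : ∀ x : R, star v * (v * x) = x := fun x => by rw [← mul_assoc, hv, one_mul]
  rw [star_one_sub_add_conj]
  simp only [mul_add, add_mul, mul_sub, sub_mul, mul_one, one_mul, mul_assoc, hv']
  noncomm_ring

theorem one_sub_add_conj_mul_star_self (hv : star v * v = 1) (a : R) :
    (1 - v * star v + v * a * star v) * star (1 - v * star v + v * a * star v) =
      1 - v * (1 - a * star a) * star v := by
  have h := star_mul_self_one_sub_add_conj hv (star a)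
  rw [star_one_sub_add_conj, star_star] at h
  rwa [star_one_sub_add_conj]

theorem star_one_sub_add_conj_mul_self (hv : star v * v = 1) (a : R) :
    star (1 - v * star v + v * a * star v) * v = v * star a := by
  rw [star_one_sub_add_conj]
  simp only [add_mul, sub_mul, one_mul, mul_assoc, hv, mul_one]
  noncomm_ring

variable {u T q : R}

theorem star_mul_self_mul_add_mul_eq_one (hu : star u * u = 1) (huv : star u * v = v * T)
    (hv : star v * v = 1) (hT : star T * T = 1 - q) (hTq : T * q = 0) (hq_sa : star q = q)
    (hq_idem : q * q = q) :
    star (u * T + v * q) * (u * T + v * q) = 1 := by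
  have hvu : star v * u = star T * star v := by
    simpa using congrArg star huv
  calc star (u * T + v * q) * (u * T + v * q)
      = star T * (star u * u) * T + star T * (star u * v) * q
          + q * (star v * u) * T + q * (star v * v) * q := by
        simp only [star_add, star_mul, hq_sa]; noncomm_ring
    _ = star T * T + star T * v * (T * q) + star (T * q) * star v * T + q * q := by
        rw [hu, huv, hvu, hv, star_mul, hq_sa]; noncomm_ring
    _ = 1 := by rw [hT, hTq, hq_idem]; simp

theorem mul_add_mul_mul_star_self_eq_one (hu : u * star u = 1 - v * q * star v)
    (hT : T * star T = 1) (hTq : T * q = 0) (hq_sa : star q = q) (hq_idem : q * q = q) :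
    (u * T + v * q) * star (u * T + v * q) = 1 := by
  calc (u * T + v * q) * star (u * T + v * q)
      = u * (T * star T) * star u + u * (T * q) * star v
          + v * star (T * q) * star u + v * (q * q) * star v := by
        simp only [star_add, star_mul, hq_sa]; noncomm_ring
    _ = 1 := by rw [hT, hTq, hq_idem, mul_one, hu]; simp

end StarRing

/-- Let `M` be a unital C*-algebra and `q, v, T ∈ M` with `q = q*`,
`q² = q`, `v*v = 1`, `T*T = 1 − q`, `T T* = 1`, and `T q = 0`.  Then
`w := (1 − v v* + v T* v*) T + v q` is a unitary of `M`, i.e. `w*w = w w* = 1`. -/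
theorem stmt7 {M : Type*} [CStarAlgebra M]
    (q v T : M) (hq_sa : star q = q) (hq_idem : q * q = q)
    (hv : star v * v = 1)
    (hT1 : star T * T = 1 - q) (hT2 : T * star T = 1) (hTq : T * q = 0) :
    star ((1 - v * star v + v * star T * star v) * T + v * q)
        * ((1 - v * star v + v * star T * star v) * T + v * q) = 1 ∧
      ((1 - v * star v + v * star T * star v) * T + v * q)
        * star ((1 - v * star v + v * star T * star v) * T + v * q) = 1 := by
  have hu : star (1 - v * star v + v * star T * star v) * (1 - v * star v + v * star T * star v)
      = 1 := by
    rw [star_mul_self_one_sub_add_conj hv, star_star, hT2, sub_self, mul_zero, zero_mul, sub_zero]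
  have hu' : (1 - v * star v + v * star T * star v) * star (1 - v * star v + v * star T * star v)
      = 1 - v * q * star v := by
    rw [one_sub_add_conj_mul_star_self hv, star_star, hT1, sub_sub_cancel]
  have huv : star (1 - v * star v + v * star T * star v) * v = v * T := by
    rw [star_one_sub_add_conj_mul_self hv, star_star]
  exact ⟨star_mul_self_mul_add_mul_eq_one hu huv hv hT1 hTq hq_sa hq_idem,
    mul_add_mul_mul_star_self_eq_one hu' hT2 hTq hq_sa hq_idem⟩
end

section
/- Let M be a unital C*-algebra and let q, v, T ∈ M satisfy q = q*, q² = q, v*v = 1, T*T = 1 − q, T T* = 1, and T q = 0, and set w := (1 − v v* + v T* v*) T + v q. Let a, b ∈ M be elements with T* b = b T* and q b = b q. Then ‖a w − w (T* a T + q b q)‖ ≤ 3‖a v − v b‖ + 2‖a* v − v b*‖. -/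
/-!
Since `T X = a T` and `q X = b q` for `X = T* a T + q b q`, the defect `a w − w X` equals
`⁅a, P⁆ T + (a v − v b) q`, where `P = 1 − v v* + v T* v*`. For `y ∈ {1, T*}`, which commute
with `b`, the commutator `⁅a, v y v*⁆` splits as `(a v − v b) y v* − v y (v* a − b v*)`, and
`v* a − b v*` is the adjoint of `a* v − v b*`. All of `v`, `T`, `q` are contractions, so each
commutator costs `‖a v − v b‖ + ‖a* v − v b*‖` and the last term one more `‖a v − v b‖`.
-/

section Contraction

variable {R : Type*} [NonUnitalSeminormedRing R] {x : R}

theorem norm_mul_le_of_norm_le_one_left (hx : ‖x‖ ≤ 1) (y : R) : ‖x * y‖ ≤ ‖y‖ :=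
  (norm_mul_le x y).trans (mul_le_of_le_one_left (norm_nonneg y) hx)

theorem norm_mul_le_of_norm_le_one_right (hx : ‖x‖ ≤ 1) (y : R) : ‖y * x‖ ≤ ‖y‖ :=
  (norm_mul_le y x).trans (mul_le_of_le_one_right (norm_nonneg y) hx)

end Contraction

theorem IsStarProjection.norm_le_one_of_star_mul_self_eq {E : Type*} [NonUnitalNormedRing E]
    [StarRing E] [CStarRing E] {x p : E} (hp : IsStarProjection p) (hx : star x * x = p) :
    ‖x‖ ≤ 1 := by
  have hsq : ‖x‖ * ‖x‖ ≤ 1 := by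
    rw [← CStarRing.norm_star_mul_self, hx]
    exact hp.norm_le p
  nlinarith [norm_nonneg x]

theorem norm_lie_mul_mul_star_le {E : Type*} [NormedRing E] [StarRing E] [NormedStarGroup E]
    {a b v y : E} (hv : ‖v‖ ≤ 1) (hy : ‖y‖ ≤ 1) (hyb : y * b = b * y) :
    ‖⁅a, v * y * star v⁆‖ ≤ ‖a * v - v * b‖ + ‖star a * v - v * star b‖ := by
  have hsplit : ⁅a, v * y * star v⁆
      = (a * v - v * b) * y * star v - v * y * (star v * a - b * star v) := by
    have hcomm : v * (b * y) * star v - v * (y * b) * star v = 0 := by rw [hyb, sub_self]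
    rw [Ring.lie_def, ← sub_eq_zero, ← hcomm]
    noncomm_ring
  have hadj : ‖star v * a - b * star v‖ = ‖star a * v - v * star b‖ := by
    rw [← norm_star, star_sub, star_mul, star_mul, star_star, norm_sub_rev]
  rw [hsplit, ← hadj]
  refine (norm_sub_le _ _).trans (add_le_add ?_ ?_)
  · exact (norm_mul_le_of_norm_le_one_right (by rwa [norm_star]) _).trans
      (norm_mul_le_of_norm_le_one_right hy _)
  · rw [mul_assoc]
    exact (norm_mul_le_of_norm_le_one_left hv _).trans (norm_mul_le_of_norm_le_one_left hy _)

section Cancellation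

variable {R : Type*} [Ring R] [StarRing R] {q T : R}

theorem mul_star_mul_mul_add_mul_mul (hTT : T * star T = 1) (hTq : T * q = 0) (a b : R) :
    T * (star T * a * T + q * b * q) = a * T := by
  simp only [mul_add, ← mul_assoc, hTT, hTq, one_mul, zero_mul, add_zero]

theorem IsStarProjection.mul_star_mul_mul_add_mul_mul (hq : IsStarProjection q)
    (hTq : T * q = 0) {b : R} (hqb : q * b = b * q) (a : R) :
    q * (star T * a * T + q * b * q) = b * q := by
  have hqT : q * star T = 0 := by
    simpa [hq.isSelfAdjoint.star_eq] using congr(star $hTq)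
  rw [mul_add, ← mul_assoc, ← mul_assoc, hqT, zero_mul, zero_mul, zero_add, ← mul_assoc,
    ← mul_assoc, hq.isIdempotentElem.eq, hqb, mul_assoc, hq.isIdempotentElem.eq]

end Cancellation

theorem mul_sub_mul_eq_lie_mul_add {R : Type*} [Ring R] {a b q v P T X : R}
    (hTX : T * X = a * T) (hqX : q * X = b * q) :
    a * (P * T + v * q) - (P * T + v * q) * X = ⁅a, P⁆ * T + (a * v - v * b) * q := by
  rw [add_mul, mul_assoc, hTX, mul_assoc, hqX, Ring.lie_def]
  noncomm_ring

/-- Let `M` be a unital C*-algebra, let `q, v, T ∈ M` satisfy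
`q = q*`, `q² = q`, `v*v = 1`, `T*T = 1 − q`, `T T* = 1`, `T q = 0`, and set
`w := (1 − v v* + v T* v*) T + v q`.  Let `a, b ∈ M` with `T* b = b T*` and
`q b = b q`.  Then `‖a w − w (T* a T + q b q)‖ ≤ 3‖a v − v b‖ + 2‖a* v − v b*‖`. -/
theorem stmt9 {M : Type*} [CStarAlgebra M]
    (q v T : M) (hq_sa : star q = q) (hq_idem : q * q = q)
    (hv : star v * v = 1)
    (hT1 : star T * T = 1 - q) (hT2 : T * star T = 1) (hTq : T * q = 0)
    (a b : M) (hTb : star T * b = b * star T) (hqb : q * b = b * q) :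
    ‖a * ((1 - v * star v + v * star T * star v) * T + v * q)
        - ((1 - v * star v + v * star T * star v) * T + v * q)
            * (star T * a * T + q * b * q)‖ ≤
      3 * ‖a * v - v * b‖ + 2 * ‖star a * v - v * star b‖ := by
  have hq : IsStarProjection q := ⟨hq_idem, hq_sa⟩
  have hv1 : ‖v‖ ≤ 1 := (IsStarProjection.one M).norm_le_one_of_star_mul_self_eq hv
  have hT : ‖T‖ ≤ 1 := hq.one_sub.norm_le_one_of_star_mul_self_eq hT1
  have hvv := norm_lie_mul_mul_star_le (a := a) hv1 ((IsStarProjection.one M).norm_le 1)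
    (Commute.one_left b).eq
  have hvTv := norm_lie_mul_mul_star_le (a := a) (y := star T) hv1 (by rwa [norm_star]) hTb
  have hlieP : ⁅a, 1 - v * star v + v * star T * star v⁆
      = ⁅a, v * star T * star v⁆ - ⁅a, v * 1 * star v⁆ := by
    simp only [Ring.lie_def]
    noncomm_ring
  rw [mul_sub_mul_eq_lie_mul_add (mul_star_mul_mul_add_mul_mul hT2 hTq a b)
    (hq.mul_star_mul_mul_add_mul_mul hTq hqb a), hlieP]
  calc _ ≤ ‖⁅a, v * star T * star v⁆ - ⁅a, v * 1 * star v⁆‖ + ‖a * v - v * b‖ :=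
        (norm_add_le _ _).trans (add_le_add (norm_mul_le_of_norm_le_one_right hT _)
          (norm_mul_le_of_norm_le_one_right (hq.norm_le q) _))
    _ ≤ _ := by linarith [norm_sub_le ⁅a, v * star T * star v⁆ ⁅a, v * 1 * star v⁆]
end

section
/- Let H be a complex Hilbert space, let A be a C*-subalgebra of B(H) containing the identity operator, and let ρ : A → B(H) be a unital *-homomorphism. Let S ∈ B(H) with S*S = 1 and set q := S S*. Let (j_n)_{n≥1} be a sequence in B(H) with j_1 = j_1* = q, j_n* j_n = q for all n, j_m* j_n = 0 for m ≠ n, and such that for every ξ ∈ H the family (j_n j_n* ξ) is summable with sum ξ; let T ∈ B(H) be the operator determined by Tξ = Σ_n j_n (j_{n+1}* ξ), and for a ∈ A let λ^∞(a) ∈ B(H) be the operator determined by λ^∞(a)ξ = Σ_n j_n S ρ(a) S* j_n* ξ. Assume that for every finite subset F of A and every ε > 0 there exists an isometry v ∈ B(H) with ‖v λ^∞(a) − a v‖ < ε for all a ∈ F. Then for every finite subset F of A and every ε > 0 there exists a unitary w ∈ B(H) such that ‖w (T* a T + S ρ(a) S*) w* − a‖ < ε for all a ∈ F. -/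
/-!
`T*` and `S` form a Cuntz pair of isometries (`T T* = 1`, `S* S = 1`, `T S = 0`,
`T* T + S S* = 1`). These relations, together with `λ^∞(a) S = S ρ(a)`,
`λ^∞(a)* = λ^∞(a*)` and `T λ^∞(a) = λ^∞(a) T`, are checked by multiplying with the `jₙ`,
whose ranges are orthogonal and add up to `1`.

If `v` is an isometry with `v λ^∞(a) ≈ a v`, then `s₁ := v T* v* + (1 - v v*)` and `s₂ := v S`
form another Cuntz pair, so `w := s₁ T + s₂ S*` is unitary. As
`w (T* a T + S ρ(a) S*) = s₁ a T + s₂ ρ(a) S*`, the error `‖w (T* a T + S ρ(a) S*) w* - a‖` is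
bounded by `‖s₁ a - a s₁‖ + ‖s₂ ρ(a) - a s₂‖`, and both terms are small because `T*` commutes
with `λ^∞(a)` and `λ^∞(a) S = S ρ(a)`.
-/

theorem isStarProjection_mul_star_self {R : Type*} [Monoid R] [StarMul R] {x : R}
    (hx : star x * x = 1) : IsStarProjection (x * star x) :=
  ⟨by rw [IsIdempotentElem, mul_assoc, ← mul_assoc (star x), hx, one_mul], .mul_star_self x⟩

section CuntzPair

variable {R : Type*} [Ring R] [StarRing R]

structure IsCuntzPair (s₁ s₂ : R) : Prop where
  star_mul_self_fst : star s₁ * s₁ = 1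
  star_mul_self_snd : star s₂ * s₂ = 1
  star_fst_mul_snd : star s₁ * s₂ = 0
  mul_star_add_mul_star : s₁ * star s₁ + s₂ * star s₂ = 1

namespace IsCuntzPair

variable {s₁ s₂ t₁ t₂ : R}

theorem star_snd_mul_fst (h : IsCuntzPair s₁ s₂) : star s₂ * s₁ = 0 := by
  simpa using congrArg star h.star_fst_mul_snd

theorem mul_star_add_mul_star_mem_unitary (hs : IsCuntzPair s₁ s₂) (ht : IsCuntzPair t₁ t₂) :
    s₁ * star t₁ + s₂ * star t₂ ∈ unitary R := by
  constructor
  · calc star (s₁ * star t₁ + s₂ * star t₂) * (s₁ * star t₁ + s₂ * star t₂)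
        = t₁ * (star s₁ * s₁) * star t₁ + t₁ * (star s₁ * s₂) * star t₂
          + t₂ * (star s₂ * s₁) * star t₁ + t₂ * (star s₂ * s₂) * star t₂ := by
          simp only [star_add, star_mul, star_star]; noncomm_ring
      _ = 1 := by
          simp [hs.star_mul_self_fst, hs.star_mul_self_snd, hs.star_fst_mul_snd,
            hs.star_snd_mul_fst, ht.mul_star_add_mul_star]
  · calc (s₁ * star t₁ + s₂ * star t₂) * star (s₁ * star t₁ + s₂ * star t₂)
        = s₁ * (star t₁ * t₁) * star s₁ + s₁ * (star t₁ * t₂) * star s₂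
          + s₂ * (star t₂ * t₁) * star s₁ + s₂ * (star t₂ * t₂) * star s₂ := by
          simp only [star_add, star_mul, star_star]; noncomm_ring
      _ = 1 := by
          simp [ht.star_mul_self_fst, ht.star_mul_self_snd, ht.star_fst_mul_snd,
            ht.star_snd_mul_fst, hs.mul_star_add_mul_star]

theorem isometry_conj {v : R} (hs : IsCuntzPair s₁ s₂) (hv : star v * v = 1) :
    IsCuntzPair (v * s₁ * star v + (1 - v * star v)) (v * s₂) := by
  have hvv : ∀ x, star v * (v * x) = x := fun x => by rw [← mul_assoc, hv, one_mul]
  have hss : ∀ x, star s₁ * (s₁ * x) = x := fun x => by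
    rw [← mul_assoc, hs.star_mul_self_fst, one_mul]
  constructor
  · simp only [star_add, star_sub, star_mul, star_star, star_one, mul_add, add_mul, mul_sub,
      sub_mul, mul_assoc, one_mul, mul_one, hvv, hss]
    abel
  · simp only [star_mul, mul_assoc, hvv, hs.star_mul_self_snd]
  · simp only [star_add, star_sub, star_mul, star_star, star_one, add_mul, sub_mul, mul_assoc,
      one_mul, hvv, hs.star_fst_mul_snd, mul_zero]
    abel
  · have := congrArg (fun x => v * x * star v) hs.mul_star_add_mul_star
    simp only [mul_add, add_mul, mul_one, mul_assoc] at this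
    simp only [star_add, star_sub, star_mul, star_star, star_one, mul_add, add_mul, mul_sub,
      sub_mul, mul_assoc, one_mul, mul_one, hvv]
    rw [← this]
    abel

theorem mul_conj_add_conj (ht : IsCuntzPair t₁ t₂) (s₁ s₂ x y : R) :
    (s₁ * star t₁ + s₂ * star t₂) * (t₁ * x * star t₁ + t₂ * y * star t₂)
      = s₁ * x * star t₁ + s₂ * y * star t₂ := by
  simp only [mul_add, add_mul, ← mul_assoc]
  simp only [mul_assoc s₁ (star t₁), mul_assoc s₂ (star t₂), ht.star_mul_self_fst,
    ht.star_mul_self_snd, ht.star_fst_mul_snd, ht.star_snd_mul_fst]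
  simp

end IsCuntzPair

end CuntzPair

section NormLeOne

variable {E : Type*} [NormedRing E]

theorem norm_mul_le_of_norm_right_le_one {x y : E} (hy : ‖y‖ ≤ 1) : ‖x * y‖ ≤ ‖x‖ :=
  (norm_mul_le x y).trans (mul_le_of_le_one_right (norm_nonneg x) hy)

theorem norm_mul_le_of_norm_left_le_one {x y : E} (hx : ‖x‖ ≤ 1) : ‖x * y‖ ≤ ‖y‖ :=
  (norm_mul_le x y).trans (mul_le_of_le_one_left (norm_nonneg y) hx)

variable [StarRing E] [CStarRing E]

theorem norm_le_one_of_star_mul_self_eq_one {x : E} (hx : star x * x = 1) : ‖x‖ ≤ 1 := by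
  have hone : ‖(1 : E)‖ ≤ 1 := by
    have : ‖(1 : E)‖ * ‖(1 : E)‖ = ‖(1 : E)‖ := by
      simpa using (CStarRing.norm_star_mul_self (x := (1 : E))).symm
    nlinarith [norm_nonneg (1 : E)]
  have hx' : ‖x‖ * ‖x‖ = ‖(1 : E)‖ := by rw [← CStarRing.norm_star_mul_self, hx]
  nlinarith [norm_nonneg x]

theorem norm_star_le_one_of_star_mul_self_eq_one {x : E} (hx : star x * x = 1) :
    ‖star x‖ ≤ 1 := by
  rw [norm_star]; exact norm_le_one_of_star_mul_self_eq_one hx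

end NormLeOne

section CStarRing

variable {E : Type*} [NormedRing E] [StarRing E] [CStarRing E] {s₁ s₂ t₁ t₂ : E}

theorem IsCuntzPair.norm_conj_sub_le (hs : IsCuntzPair s₁ s₂) (ht : IsCuntzPair t₁ t₂)
    (x y a : E) :
    ‖(s₁ * star t₁ + s₂ * star t₂) * (t₁ * x * star t₁ + t₂ * y * star t₂)
        * star (s₁ * star t₁ + s₂ * star t₂) - a‖
      ≤ ‖s₁ * x - a * s₁‖ + ‖s₂ * y - a * s₂‖ := by
  have hw := hs.mul_star_add_mul_star_mem_unitary ht
  have key : (s₁ * star t₁ + s₂ * star t₂) * (t₁ * x * star t₁ + t₂ * y * star t₂)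
        * star (s₁ * star t₁ + s₂ * star t₂) - a
      = ((s₁ * x - a * s₁) * star t₁ + (s₂ * y - a * s₂) * star t₂)
        * star (s₁ * star t₁ + s₂ * star t₂) := by
    conv_lhs => rw [← mul_one a, ← hw.2, ht.mul_conj_add_conj]
    noncomm_ring
  rw [key]
  refine (norm_mul_le_of_norm_right_le_one
    (norm_star_le_one_of_star_mul_self_eq_one hw.1)).trans ((norm_add_le _ _).trans ?_)
  exact add_le_add
    (norm_mul_le_of_norm_right_le_one
      (norm_star_le_one_of_star_mul_self_eq_one ht.star_mul_self_fst))
    (norm_mul_le_of_norm_right_le_one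
      (norm_star_le_one_of_star_mul_self_eq_one ht.star_mul_self_snd))

theorem norm_conj_commutator_le {v c l a : E} (hv : ‖v‖ ≤ 1) (hc : ‖c‖ ≤ 1) (hcl : Commute c l) :
    ‖v * c * star v * a - a * (v * c * star v)‖ ≤ ‖star v * a - l * star v‖ + ‖v * l - a * v‖ := by
  have key : v * c * star v * a - a * (v * c * star v)
      = v * c * (star v * a - l * star v) + (v * l - a * v) * (c * star v) := by
    have : v * c * (l * star v) = v * l * (c * star v) := by
      rw [← mul_assoc, mul_assoc v c l, hcl.eq, ← mul_assoc, mul_assoc (v * l)]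
    rw [mul_sub, sub_mul, this]; noncomm_ring
  have hcv : ‖c * star v‖ ≤ 1 :=
    (norm_mul_le_of_norm_right_le_one (by rwa [norm_star])).trans hc
  rw [key]
  exact (norm_add_le _ _).trans (add_le_add
    (norm_mul_le_of_norm_left_le_one ((norm_mul_le_of_norm_right_le_one hc).trans hv))
    (norm_mul_le_of_norm_right_le_one hcv))

theorem IsCuntzPair.norm_isometry_conj_sub_le (ht : IsCuntzPair t₁ t₂) {v l r : E}
    (hv : star v * v = 1) (hl : Commute t₁ l) (hlr : l * t₂ = t₂ * r) (a : E) :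
    ‖((v * t₁ * star v + (1 - v * star v)) * star t₁ + v * t₂ * star t₂)
        * (t₁ * a * star t₁ + t₂ * r * star t₂)
        * star ((v * t₁ * star v + (1 - v * star v)) * star t₁ + v * t₂ * star t₂) - a‖
      ≤ 2 * ‖star v * a - l * star v‖ + 3 * ‖v * l - a * v‖ := by
  have hnv := norm_le_one_of_star_mul_self_eq_one hv
  have hfst : ‖(v * t₁ * star v + (1 - v * star v)) * a - a * (v * t₁ * star v + (1 - v * star v))‖
      ≤ 2 * ‖star v * a - l * star v‖ + 2 * ‖v * l - a * v‖ := by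
    have split : (v * t₁ * star v + (1 - v * star v)) * a - a * (v * t₁ * star v + (1 - v * star v))
        = (v * t₁ * star v * a - a * (v * t₁ * star v))
          - (v * 1 * star v * a - a * (v * 1 * star v)) := by noncomm_ring
    rw [split]
    have h₁ := norm_conj_commutator_le hnv
      (norm_le_one_of_star_mul_self_eq_one ht.star_mul_self_fst) hl (a := a)
    have h₂ := norm_conj_commutator_le hnv (norm_le_one_of_star_mul_self_eq_one (by simp))
      (Commute.one_left l) (a := a)
    linarith [norm_sub_le (v * t₁ * star v * a - a * (v * t₁ * star v))
      (v * 1 * star v * a - a * (v * 1 * star v))]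
  have hsnd : ‖v * t₂ * r - a * (v * t₂)‖ ≤ ‖v * l - a * v‖ := by
    have : v * t₂ * r - a * (v * t₂) = (v * l - a * v) * t₂ := by
      rw [sub_mul, mul_assoc v l, hlr]; noncomm_ring
    rw [this]
    exact norm_mul_le_of_norm_right_le_one
      (norm_le_one_of_star_mul_self_eq_one ht.star_mul_self_snd)
  have := (ht.isometry_conj hv).norm_conj_sub_le ht a r a
  linarith

end CStarRing

section ShiftSystem

variable {H : Type*} [NormedAddCommGroup H] [InnerProductSpace ℂ H]

theorem mul_eq_of_hasSum_of_forall_ne {j y : ℕ → H →L[ℂ] H} {X Z : H →L[ℂ] H}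
    (hX : ∀ ξ, HasSum (fun n => j n (y n ξ)) (X ξ)) (m : ℕ) (hy : ∀ n ≠ m, y n * Z = 0) :
    X * Z = j m * y m * Z := by
  ext ξ
  refine (hX (Z ξ)).unique (hasSum_single m fun n hn => ?_)
  rw [← mul_apply_eq_comp (y n), hy n hn, zero_apply, map_zero]

theorem mul_eq_zero_of_hasSum {j y : ℕ → H →L[ℂ] H} {X Z : H →L[ℂ] H}
    (hX : ∀ ξ, HasSum (fun n => j n (y n ξ)) (X ξ)) (hy : ∀ n, y n * Z = 0) : X * Z = 0 := by
  rw [mul_eq_of_hasSum_of_forall_ne hX 0 fun n _ => hy n, mul_assoc, hy 0, mul_zero]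

variable [CompleteSpace H]

structure IsShiftSystem (j : ℕ → H →L[ℂ] H) (q : H →L[ℂ] H) : Prop where
  star_mul_self : ∀ n, star (j n) * j n = q
  star_mul_of_ne : ∀ m n, m ≠ n → star (j m) * j n = 0
  hasSum : ∀ ξ, HasSum (fun n => j n (star (j n) ξ)) ξ

namespace IsShiftSystem

variable {j : ℕ → H →L[ℂ] H} {q : H →L[ℂ] H}

theorem ext (hj : IsShiftSystem j q) {X Y : H →L[ℂ] H} (h : ∀ n, X * j n = Y * j n) :
    X = Y := by
  ext ξ
  have hX := (hj.hasSum ξ).mapL X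
  simp only [← mul_apply_eq_comp X, h] at hX
  exact hX.unique ((hj.hasSum ξ).mapL Y)

theorem star_mul_eq_of_hasSum (hj : IsShiftSystem j q) {y : ℕ → H →L[ℂ] H} {X : H →L[ℂ] H}
    (hX : ∀ ξ, HasSum (fun n => j n (y n ξ)) (X ξ)) (m : ℕ) :
    star (j m) * X = q * y m := by
  ext ξ
  refine ((hX ξ).mapL (star (j m))).unique (hasSum_single m fun n hn => ?_) |>.trans ?_
  · rw [← mul_apply_eq_comp (star (j m)), hj.star_mul_of_ne m n (Ne.symm hn), zero_apply]
  · rw [← mul_apply_eq_comp (star (j m)), hj.star_mul_self, mul_apply_eq_comp]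

theorem mul_proj (hj : IsShiftSystem j q) (hq : IsStarProjection q) (n : ℕ) :
    j n * q = j n := by
  have hq' : q * (1 - q) = 0 := by rw [mul_sub, mul_one, hq.isIdempotentElem.eq, sub_self]
  have : star (j n * (1 - q)) * (j n * (1 - q)) = 0 := by
    rw [star_mul, star_sub, star_one, hq.isSelfAdjoint.star_eq, mul_assoc,
      ← mul_assoc (star (j n)), hj.star_mul_self, hq', mul_zero]
  rw [CStarRing.star_mul_self_eq_zero_iff, mul_sub, mul_one, sub_eq_zero] at this
  exact this.symm

theorem proj_mul_star (hj : IsShiftSystem j q) (hq : IsStarProjection q) (n : ℕ) :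
    q * star (j n) = star (j n) := by
  simpa [hq.isSelfAdjoint.star_eq] using congrArg star (hj.mul_proj hq n)

section Shift

variable {T : H →L[ℂ] H}

theorem star_mul_shift (hj : IsShiftSystem j q) (hq : IsStarProjection q)
    (hT : ∀ ξ, HasSum (fun n => j n (star (j (n + 1)) ξ)) (T ξ)) (m : ℕ) :
    star (j m) * T = star (j (m + 1)) := by
  rw [hj.star_mul_eq_of_hasSum hT m, hj.proj_mul_star hq]

theorem star_shift_mul (hj : IsShiftSystem j q) (hq : IsStarProjection q)
    (hT : ∀ ξ, HasSum (fun n => j n (star (j (n + 1)) ξ)) (T ξ)) (m : ℕ) :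
    star T * j m = j (m + 1) := by
  simpa using congrArg star (hj.star_mul_shift hq hT m)

theorem shift_mul_zero (hj : IsShiftSystem j q)
    (hT : ∀ ξ, HasSum (fun n => j n (star (j (n + 1)) ξ)) (T ξ)) : T * j 0 = 0 :=
  mul_eq_zero_of_hasSum hT fun n => hj.star_mul_of_ne _ _ n.succ_ne_zero

theorem shift_mul_succ (hj : IsShiftSystem j q) (hq : IsStarProjection q)
    (hT : ∀ ξ, HasSum (fun n => j n (star (j (n + 1)) ξ)) (T ξ)) (n : ℕ) :
    T * j (n + 1) = j n := by
  rw [mul_eq_of_hasSum_of_forall_ne hT n fun m hm => hj.star_mul_of_ne _ _ (by omega),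
    mul_assoc, hj.star_mul_self, hj.mul_proj hq]

theorem shift_mul_star (hj : IsShiftSystem j q) (hq : IsStarProjection q)
    (hT : ∀ ξ, HasSum (fun n => j n (star (j (n + 1)) ξ)) (T ξ)) : T * star T = 1 :=
  hj.ext fun n => by
    rw [mul_assoc, hj.star_shift_mul hq hT, hj.shift_mul_succ hq hT, one_mul]

theorem star_shift_mul_add (hj : IsShiftSystem j q) (hq : IsStarProjection q)
    (hT : ∀ ξ, HasSum (fun n => j n (star (j (n + 1)) ξ)) (T ξ)) (h0 : j 0 = q) :
    star T * T + q = 1 :=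
  hj.ext fun n => by
    have hq0 : star (j 0) = q := by rw [h0, hq.isSelfAdjoint.star_eq]
    cases n with
    | zero => rw [add_mul, mul_assoc, hj.shift_mul_zero hT, mul_zero, zero_add, h0,
        hq.isIdempotentElem.eq, one_mul]
    | succ n => rw [add_mul, mul_assoc, hj.shift_mul_succ hq hT, hj.star_shift_mul hq hT, ← hq0,
        hj.star_mul_of_ne 0 (n + 1) n.succ_ne_zero.symm, add_zero, one_mul]

theorem shift_mul_eq_zero_of_proj_mul (hj : IsShiftSystem j q)
    (hT : ∀ ξ, HasSum (fun n => j n (star (j (n + 1)) ξ)) (T ξ)) (h0 : j 0 = q)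
    {Z : H →L[ℂ] H} (hZ : q * Z = Z) : T * Z = 0 :=
  mul_eq_zero_of_hasSum hT fun n => by
    rw [← hZ, ← mul_assoc, ← h0, hj.star_mul_of_ne _ _ n.succ_ne_zero, zero_mul]

end Shift

section Diagonal

variable {c L : H →L[ℂ] H}

theorem diag_mul (hj : IsShiftSystem j q)
    (hL : ∀ ξ, HasSum (fun n => j n (c (star (j n) ξ))) (L ξ)) (hcq : c * q = c) (n : ℕ) :
    L * j n = j n * c := by
  rw [mul_eq_of_hasSum_of_forall_ne (y := fun m => c * star (j m)) hL n fun m hm => by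
      rw [mul_assoc, hj.star_mul_of_ne m n hm, mul_zero],
    mul_assoc, mul_assoc, hj.star_mul_self, hcq]

theorem star_mul_diag (hj : IsShiftSystem j q)
    (hL : ∀ ξ, HasSum (fun n => j n (c (star (j n) ξ))) (L ξ)) (hqc : q * c = c) (n : ℕ) :
    star (j n) * L = c * star (j n) := by
  rw [hj.star_mul_eq_of_hasSum (y := fun m => c * star (j m)) hL n, ← mul_assoc, hqc]

theorem star_diag (hj : IsShiftSystem j q) (hq : IsStarProjection q) {L' : H →L[ℂ] H}
    (hL : ∀ ξ, HasSum (fun n => j n (c (star (j n) ξ))) (L ξ))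
    (hL' : ∀ ξ, HasSum (fun n => j n (star c (star (j n) ξ))) (L' ξ))
    (hqc : q * c = c) : star L = L' :=
  hj.ext fun n => by
    have hcq' : star c * q = star c := by
      simpa [hq.isSelfAdjoint.star_eq] using congrArg star hqc
    rw [hj.diag_mul hL' hcq', ← star_star (j n), ← star_mul, hj.star_mul_diag hL hqc,
      star_mul, star_star]

theorem commute_shift_diag (hj : IsShiftSystem j q) (hq : IsStarProjection q) {T : H →L[ℂ] H}
    (hT : ∀ ξ, HasSum (fun n => j n (star (j (n + 1)) ξ)) (T ξ))
    (hL : ∀ ξ, HasSum (fun n => j n (c (star (j n) ξ))) (L ξ)) (hcq : c * q = c) :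
    Commute T L :=
  hj.ext fun n => by
    cases n with
    | zero => rw [mul_assoc, hj.diag_mul hL hcq, ← mul_assoc, hj.shift_mul_zero hT,
        zero_mul, mul_assoc, hj.shift_mul_zero hT, mul_zero]
    | succ n => rw [mul_assoc, hj.diag_mul hL hcq, ← mul_assoc, hj.shift_mul_succ hq hT,
        mul_assoc, hj.shift_mul_succ hq hT, hj.diag_mul hL hcq]

theorem diag_mul_of_proj_mul (hj : IsShiftSystem j q) (hq : IsStarProjection q)
    (hL : ∀ ξ, HasSum (fun n => j n (c (star (j n) ξ))) (L ξ)) (h0 : j 0 = q)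
    (hqc : q * c = c) {Z : H →L[ℂ] H} (hZ : q * Z = Z) : L * Z = c * Z := by
  rw [mul_eq_of_hasSum_of_forall_ne (y := fun m => c * star (j m)) hL 0 fun n hn => by
      rw [mul_assoc, ← hZ, ← mul_assoc (star (j n)), ← h0, hj.star_mul_of_ne n 0 hn, zero_mul,
        mul_zero],
    h0, hq.isSelfAdjoint.star_eq, mul_assoc, mul_assoc, hZ, ← mul_assoc, hqc]

end Diagonal

section Isometry

variable {S : H →L[ℂ] H}

theorem isCuntzPair_star_shift (hj : IsShiftSystem j (S * star S)) (hS : star S * S = 1)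
    {T : H →L[ℂ] H} (hT : ∀ ξ, HasSum (fun n => j n (star (j (n + 1)) ξ)) (T ξ))
    (h0 : j 0 = S * star S) : IsCuntzPair (star T) S := by
  have hq := isStarProjection_mul_star_self hS
  refine ⟨?_, hS, ?_, ?_⟩ <;> rw [star_star]
  · exact hj.shift_mul_star hq hT
  · exact hj.shift_mul_eq_zero_of_proj_mul hT h0 (by rw [mul_assoc, hS, mul_one])
  · exact hj.star_shift_mul_add hq hT h0

variable {r L L' : H →L[ℂ] H}

theorem diag_conj_mul (hj : IsShiftSystem j (S * star S)) (hS : star S * S = 1)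
    (h0 : j 0 = S * star S)
    (hL : ∀ ξ, HasSum (fun n => j n ((S * r * star S) (star (j n) ξ))) (L ξ)) :
    L * S = S * r := by
  rw [hj.diag_mul_of_proj_mul (isStarProjection_mul_star_self hS) hL h0
      (by simp only [← mul_assoc, mul_assoc S (star S) S, hS, mul_one])
      (by rw [mul_assoc, hS, mul_one]),
    mul_assoc, hS, mul_one]

theorem star_diag_conj (hj : IsShiftSystem j (S * star S)) (hS : star S * S = 1)
    (hL : ∀ ξ, HasSum (fun n => j n ((S * r * star S) (star (j n) ξ))) (L ξ))
    (hL' : ∀ ξ, HasSum (fun n => j n ((S * star r * star S) (star (j n) ξ))) (L' ξ)) :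
    star L = L' :=
  hj.star_diag (isStarProjection_mul_star_self hS) hL (by simpa [mul_assoc] using hL')
    (by simp only [← mul_assoc, mul_assoc S (star S) S, hS, mul_one])

theorem commute_star_shift_diag_conj (hj : IsShiftSystem j (S * star S)) (hS : star S * S = 1)
    {T : H →L[ℂ] H} (hT : ∀ ξ, HasSum (fun n => j n (star (j (n + 1)) ξ)) (T ξ))
    (hL : ∀ ξ, HasSum (fun n => j n ((S * r * star S) (star (j n) ξ))) (L ξ))
    (hL' : ∀ ξ, HasSum (fun n => j n ((S * star r * star S) (star (j n) ξ))) (L' ξ)) :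
    Commute (star T) L := by
  have hcomm := hj.commute_shift_diag (isStarProjection_mul_star_self hS) hT hL'
    (by rw [mul_assoc, ← mul_assoc (star S), hS, one_mul])
  simpa only [hj.star_diag_conj hS hL' (by simpa only [star_star] using hL)]
    using hcomm.star_star

end Isometry

end IsShiftSystem

end ShiftSystem

theorem stmt11_general {H : Type*} [NormedAddCommGroup H] [InnerProductSpace ℂ H]
    [CompleteSpace H]
    (A : StarSubalgebra ℂ (H →L[ℂ] H))
    (ρ : A →⋆ₐ[ℂ] (H →L[ℂ] H))
    (S : H →L[ℂ] H) (hS : star S * S = 1)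
    (j : ℕ → (H →L[ℂ] H))
    (hj1 : j 0 = S * star S)
    (hjq : ∀ n, star (j n) * j n = S * star S)
    (hjorth : ∀ m n, m ≠ n → star (j m) * j n = 0)
    (hjsum : ∀ ξ : H, HasSum (fun n => j n (star (j n) ξ)) ξ)
    (T : H →L[ℂ] H)
    (hT : ∀ ξ : H, HasSum (fun n => j n (star (j (n + 1)) ξ)) (T ξ))
    (lam : A → (H →L[ℂ] H))
    (hlam : ∀ (a : A) (ξ : H),
      HasSum (fun n => j n ((S * ρ a * star S) (star (j n) ξ))) (lam a ξ))
    (hyp : ∀ (F : Finset A) (ε : ℝ), 0 < ε →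
      ∃ v : H →L[ℂ] H, star v * v = 1 ∧
        ∀ a ∈ F, ‖v * lam a - (a : H →L[ℂ] H) * v‖ < ε) :
    ∀ (F : Finset A) (ε : ℝ), 0 < ε →
      ∃ w : H →L[ℂ] H, star w * w = 1 ∧ w * star w = 1 ∧
        ∀ a ∈ F,
          ‖w * (star T * (a : H →L[ℂ] H) * T + S * ρ a * star S) * star w
              - (a : H →L[ℂ] H)‖ < ε := by
  classical
  have hj : IsShiftSystem j (S * star S) := ⟨hjq, hjorth, hjsum⟩
  have hlam' (a : A) (ξ : H) :
      HasSum (fun n => j n ((S * star (ρ a) * star S) (star (j n) ξ))) (lam (star a) ξ) := by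
    simpa only [map_star] using hlam (star a) ξ
  have hpair := hj.isCuntzPair_star_shift hS hT hj1
  intro F ε hε
  obtain ⟨v, hv, hvF⟩ := hyp (F ∪ F.image star) (ε / 5) (by positivity)
  have hw := (hpair.isometry_conj hv).mul_star_add_mul_star_mem_unitary hpair
  simp only [star_star] at hw
  refine ⟨_, hw.1, hw.2, fun a ha => ?_⟩
  have key := hpair.norm_isometry_conj_sub_le hv (hj.commute_star_shift_diag_conj hS hT
    (hlam a) (hlam' a)) (hj.diag_conj_mul hS hj1 (hlam a)) a
  simp only [star_star] at key
  have h₁ : ‖v * lam a - a * v‖ < ε / 5 := hvF a (Finset.mem_union_left _ ha)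
  have h₂ : ‖star v * a - lam a * star v‖ < ε / 5 := by
    have e : star (v * lam (star a) - ((star a : A) : H →L[ℂ] H) * v)
        = lam a * star v - star v * a := by
      rw [star_sub, star_mul, star_mul, ← hj.star_diag_conj hS (hlam a) (hlam' a), star_star,
        StarMemClass.coe_star, star_star]
    rw [norm_sub_rev, ← e, norm_star]
    exact hvF (star a) (Finset.mem_union_right _ (Finset.mem_image_of_mem _ ha))
  linarith

/-- (Lemma 2.4 of the paper, with `B(H)` in place of the properly
infinite von Neumann algebra, and the existence of approximating isometries for the
ampliation `λ^∞` taken as a hypothesis.)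

Let `H` be a complex Hilbert space, `A ⊆ B(H)` a C*-subalgebra containing the
identity, and `ρ : A → B(H)` a unital *-homomorphism.  Let `S ∈ B(H)` with
`S*S = 1`, `q := S S*`.  Let `(jₙ)` be as in the shift construction (indexed here by
`ℕ`, with `j n` playing the role of `j_{n+1}`), let `T` be determined by
`Tξ = Σₙ jₙ (j_{n+1}* ξ)`, and let `λ^∞(a)` be determined by
`λ^∞(a)ξ = Σₙ jₙ (S ρ(a) S* (jₙ* ξ))`.  Assume that for every finite `F ⊆ A` and
`ε > 0` there is an isometry `v` with `‖v λ^∞(a) − a v‖ < ε` for all `a ∈ F`.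
Then for every finite `F ⊆ A` and `ε > 0` there is a unitary `w ∈ B(H)` with
`‖w (T* a T + S ρ(a) S*) w* − a‖ < ε` for all `a ∈ F`. -/
theorem stmt11 {H : Type*} [NormedAddCommGroup H] [InnerProductSpace ℂ H]
    [CompleteSpace H]
    (A : StarSubalgebra ℂ (H →L[ℂ] H)) (hA : IsClosed (A : Set (H →L[ℂ] H)))
    (ρ : A →⋆ₐ[ℂ] (H →L[ℂ] H))
    (S : H →L[ℂ] H) (hS : star S * S = 1)
    (j : ℕ → (H →L[ℂ] H))
    (hj1 : j 0 = S * star S)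
    (hjq : ∀ n, star (j n) * j n = S * star S)
    (hjorth : ∀ m n, m ≠ n → star (j m) * j n = 0)
    (hjsum : ∀ ξ : H, HasSum (fun n => j n (star (j n) ξ)) ξ)
    (T : H →L[ℂ] H)
    (hT : ∀ ξ : H, HasSum (fun n => j n (star (j (n + 1)) ξ)) (T ξ))
    (lam : A → (H →L[ℂ] H))
    (hlam : ∀ (a : A) (ξ : H),
      HasSum (fun n => j n ((S * ρ a * star S) (star (j n) ξ))) (lam a ξ))
    (hyp : ∀ (F : Finset A) (ε : ℝ), 0 < ε →
      ∃ v : H →L[ℂ] H, star v * v = 1 ∧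
        ∀ a ∈ F, ‖v * lam a - (a : H →L[ℂ] H) * v‖ < ε) :
    ∀ (F : Finset A) (ε : ℝ), 0 < ε →
      ∃ w : H →L[ℂ] H, star w * w = 1 ∧ w * star w = 1 ∧
        ∀ a ∈ F,
          ‖w * (star T * (a : H →L[ℂ] H) * T + S * ρ a * star S) * star w
              - (a : H →L[ℂ] H)‖ < ε :=
  stmt11_general A ρ S hS j hj1 hjq hjorth hjsum T hT lam hlam hyp
end

section
/- Let G be a topological group. Suppose that for every group homomorphism π : F∞ × F∞ → G, every finite subset S of F∞ × F∞, and every neighborhood W of the identity of G, there exist a subgroup H of G which, with the subspace topology, has the Kirchberg property, and a group homomorphism σ : F∞ × F∞ → H such that σ(x) ∈ π(x)·W for all x ∈ S. Then G has the Kirchberg property. -/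
/-! Approximate `π` by `σ : F∞ × F∞ → H` within `V`, then `σ` by a homomorphism with
precompact image in `H` within `V`, where `V * V ⊆ W`. Precompactness passes from `H` to `G`
because the inclusion is continuous and `G`, being a topological group, is regular. -/

/-- A topological group `G` has the *Kirchberg property* if every group homomorphism
`π : F∞ × F∞ → G` (where `F∞` is the free group on countably many generators) can be
approximated, in the topology of pointwise convergence, by group homomorphisms whose
image has compact closure in `G`: for every finite set `S ⊆ F∞ × F∞` and every
neighborhood `W` of the identity there is a homomorphism `μ` with precompact image
such that `μ x ∈ π x · W` for all `x ∈ S`. -/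
def KirchbergProperty (G : Type*) [Group G] [TopologicalSpace G] : Prop :=
  ∀ (π : (FreeGroup ℕ × FreeGroup ℕ) →* G)
    (S : Finset (FreeGroup ℕ × FreeGroup ℕ)) (W : Set G), W ∈ nhds (1 : G) →
    ∃ μ : (FreeGroup ℕ × FreeGroup ℕ) →* G,
      IsCompact (closure (Set.range μ)) ∧
      ∀ x ∈ S, ∃ w ∈ W, μ x = π x * w

open Set

theorem isCompact_closure_range_comp {ι X Y : Type*} [TopologicalSpace X] [TopologicalSpace Y]
    [R1Space Y] {f : X → Y} (hf : Continuous f) {g : ι → X}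
    (hg : IsCompact (closure (range g))) : IsCompact (closure (range (f ∘ g))) :=
  (hg.image hf).closure_of_subset <| by
    rw [range_comp]
    exact image_mono subset_closure

theorem KirchbergProperty.exists_approx_of_subgroup {G : Type*} [Group G] [TopologicalSpace G]
    [R1Space G] {H : Subgroup G} (hH : KirchbergProperty H)
    (σ : (FreeGroup ℕ × FreeGroup ℕ) →* H) (S : Finset (FreeGroup ℕ × FreeGroup ℕ))
    {V : Set G} (hV : V ∈ nhds (1 : G)) :
    ∃ μ : (FreeGroup ℕ × FreeGroup ℕ) →* G,
      IsCompact (closure (range μ)) ∧ ∀ x ∈ S, ∃ w ∈ V, μ x = σ x * w := by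
  have hV' : ((↑) ⁻¹' V : Set H) ∈ nhds (1 : H) :=
    continuous_subtype_val.continuousAt.preimage_mem_nhds hV
  obtain ⟨μ, hμ, hμσ⟩ := hH σ S _ hV'
  refine ⟨H.subtype.comp μ, isCompact_closure_range_comp continuous_subtype_val hμ, ?_⟩
  intro x hx
  obtain ⟨w, hw, hμx⟩ := hμσ x hx
  exact ⟨w, hw, congrArg Subtype.val hμx⟩

/-- Let `G` be a topological group.  Suppose that for every group
homomorphism `π : F∞ × F∞ → G`, every finite subset `S` of `F∞ × F∞`, and every
neighborhood `W` of the identity of `G`, there exist a subgroup `H ≤ G` which (with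
the subspace topology) has the Kirchberg property, and a homomorphism
`σ : F∞ × F∞ → H` with `σ x ∈ π x · W` for all `x ∈ S`.  Then `G` has the Kirchberg
property. -/
theorem stmt13 {G : Type*} [Group G] [TopologicalSpace G] [IsTopologicalGroup G]
    (hyp : ∀ (π : (FreeGroup ℕ × FreeGroup ℕ) →* G)
      (S : Finset (FreeGroup ℕ × FreeGroup ℕ)) (W : Set G), W ∈ nhds (1 : G) →
      ∃ H : Subgroup G, KirchbergProperty H ∧
        ∃ σ : (FreeGroup ℕ × FreeGroup ℕ) →* H,
          ∀ x ∈ S, ∃ w ∈ W, (σ x : G) = π x * w) :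
    KirchbergProperty G := by
  intro π S W hW
  obtain ⟨V, hV, hVW⟩ := exists_nhds_one_split hW
  obtain ⟨H, hH, σ, hσπ⟩ := hyp π S V hV
  obtain ⟨μ, hμ, hμσ⟩ := hH.exists_approx_of_subgroup σ S hV
  refine ⟨μ, hμ, fun x hx => ?_⟩
  obtain ⟨w, hw, hσx⟩ := hσπ x hx
  obtain ⟨w', hw', hμx⟩ := hμσ x hx
  exact ⟨w * w', hVW w hw w' hw', by rw [hμx, hσx, mul_assoc]⟩
end
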